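/- Let U' and U'' be unitary operators on complex Hilbert spaces K' and K''. If (U, i', i''; K) and (Ũ, ĩ', ĩ''; K̃) are two minimal AA-unitary couplings of (U',K') and (U'',K'') with the same associated intertwiner, i.e. (i'')* ∘ i' = (ĩ'')* ∘ ĩ' as operators K' → K'', then the couplings are unitarily equivalent: there exists a unitary operator τ : K → K̃ with τ∘U = Ũ∘τ, τ∘i' = ĩ' and τ∘i'' = ĩ''. -/

import Mathlib

open ContinuousLinearMap

/-!
The cross Gram data `⟪i' a, i'' b⟫ = ⟪(i'')* i' a, b⟫` of a coupling is determined by its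
intertwiner, and the isometries fix `‖i' a‖` and `‖i'' b‖`. Hence `i' a + i'' b ↦ ĩ' a + ĩ'' b`
is a well-defined norm-preserving map between dense subspaces, which extends to a unitary
`τ : K → K̃`. Since both couplings intertwine `U' × U''`, `τ U = Ũ τ` holds on the dense subspace,
hence everywhere.
-/

section GramData

variable {𝕜 V W E F : Type*} [RCLike 𝕜]
  [NormedAddCommGroup V] [InnerProductSpace 𝕜 V]
  [NormedAddCommGroup W] [InnerProductSpace 𝕜 W] [CompleteSpace W]
  [NormedAddCommGroup E] [InnerProductSpace 𝕜 E] [CompleteSpace E]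
  [NormedAddCommGroup F] [InnerProductSpace 𝕜 F] [CompleteSpace F]
  {i' : V →L[𝕜] E} {i'' : W →L[𝕜] E} {j' : V →L[𝕜] F} {j'' : W →L[𝕜] F}

theorem inner_apply_eq_of_adjoint_comp_eq (h : (adjoint i'').comp i' = (adjoint j'').comp j')
    (a : V) (b : W) : inner 𝕜 (i' a) (i'' b) = inner 𝕜 (j' a) (j'' b) := by
  rw [← adjoint_inner_left, ← adjoint_inner_left, ← comp_apply, h, comp_apply]

theorem norm_add_eq_of_adjoint_comp_eq (hi' : Isometry i') (hi'' : Isometry i'')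
    (hj' : Isometry j') (hj'' : Isometry j'')
    (h : (adjoint i'').comp i' = (adjoint j'').comp j') (a : V) (b : W) :
    ‖i' a + i'' b‖ = ‖j' a + j'' b‖ := by
  rw [AddMonoidHomClass.isometry_iff_norm] at hi' hi'' hj' hj''
  rw [← sq_eq_sq₀ (norm_nonneg _) (norm_nonneg _), norm_add_sq (𝕜 := 𝕜), norm_add_sq (𝕜 := 𝕜),
    hi', hi'', hj', hj'', inner_apply_eq_of_adjoint_comp_eq h]

end GramData

theorem LinearMap.range_coprod_eq_setOf {R M M₂ M₃ : Type*} [Semiring R]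
    [AddCommMonoid M] [AddCommMonoid M₂] [AddCommMonoid M₃] [Module R M] [Module R M₂] [Module R M₃]
    (f : M →ₗ[R] M₃) (g : M₂ →ₗ[R] M₃) :
    Set.range (f.coprod g) = {x | ∃ a b, x = f a + g b} := by
  ext x
  simp [eq_comm]

theorem stmt_8 {K' K'' K Kt : Type*}
    [NormedAddCommGroup K'] [InnerProductSpace ℂ K']
    [NormedAddCommGroup K''] [InnerProductSpace ℂ K''] [CompleteSpace K'']
    [NormedAddCommGroup K] [InnerProductSpace ℂ K] [CompleteSpace K]
    [NormedAddCommGroup Kt] [InnerProductSpace ℂ Kt] [CompleteSpace Kt]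
    (U' : K' →L[ℂ] K')
    (U'' : K'' →L[ℂ] K'')
    -- the first minimal AA-unitary coupling `(U, i', i''; K)`
    (U : K →L[ℂ] K)
    (i' : K' →L[ℂ] K) (i'' : K'' →L[ℂ] K)
    (hi' : Isometry i') (hi'' : Isometry i'')
    (hint' : ∀ x : K', i' (U' x) = U (i' x))
    (hint'' : ∀ x : K'', i'' (U'' x) = U (i'' x))
    (hmin : Dense {x : K | ∃ (a : K') (b : K''), x = i' a + i'' b})
    -- the second minimal AA-unitary coupling `(Ũ, ĩ', ĩ''; K̃)`
    (Ut : Kt →L[ℂ] Kt)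
    (j' : K' →L[ℂ] Kt) (j'' : K'' →L[ℂ] Kt)
    (hj' : Isometry j') (hj'' : Isometry j'')
    (hjint' : ∀ x : K', j' (U' x) = Ut (j' x))
    (hjint'' : ∀ x : K'', j'' (U'' x) = Ut (j'' x))
    (hmint : Dense {x : Kt | ∃ (a : K') (b : K''), x = j' a + j'' b})
    -- the two couplings have the same associated intertwiner
    (hsame : (adjoint i'').comp i' = (adjoint j'').comp j') :
    ∃ τ : K ≃ₗᵢ[ℂ] Kt,
      (∀ k : K, τ (U k) = Ut (τ k)) ∧
      (∀ x : K', τ (i' x) = j' x) ∧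
      (∀ x : K'', τ (i'' x) = j'' x) := by
  let e := (i' : K' →ₗ[ℂ] K).coprod (i'' : K'' →ₗ[ℂ] K)
  let f := (j' : K' →ₗ[ℂ] Kt).coprod (j'' : K'' →ₗ[ℂ] Kt)
  have he : DenseRange e := by rw [DenseRange, LinearMap.range_coprod_eq_setOf]; exact hmin
  have hf : DenseRange f := by rw [DenseRange, LinearMap.range_coprod_eq_setOf]; exact hmint
  let τ := (LinearEquiv.refl ℂ (K' × K'')).extendOfIsometry e f he hf fun p =>
    (norm_add_eq_of_adjoint_comp_eq hi' hi'' hj' hj'' hsame p.1 p.2).symm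
  have hτ (a : K') (b : K'') : τ (i' a + i'' b) = j' a + j'' b :=
    LinearEquiv.extendOfIsometry_eq _ e f he hf _ (a, b)
  refine ⟨τ, fun k => ?_, fun a => by simpa using hτ a 0, fun b => by simpa using hτ 0 b⟩
  refine he.induction_on k (isClosed_eq (by fun_prop) (by fun_prop)) fun ⟨a, b⟩ => ?_
  change τ (U (i' a + i'' b)) = Ut (τ (i' a + i'' b))
  rw [map_add, ← hint', ← hint'', hτ, hτ, map_add, hjint', hjint'']
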